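/- Let N ≥ 8 be an integer divisible by 4. The N/4 × N/4 real matrix M_2 defined as follows is invertible: the first row of M_2 is (3, −4, 1, 0, …, 0); for 2 ≤ r ≤ N/4 the r-th row is the sum of the vector with entries 1, −2, 1 in columns 1, 2, 3 and the vector with entries −1, +2, −1 in columns r, r+1, r+2 respectively, where any contribution to column N/4 + 1 is discarded, any contribution to column N/4 + 2 is placed into column N/4 instead, and contributions to coinciding columns are added. -/

import Mathlib

/-- The `N/4 × N/4` matrix `M₂` (1-indexed description; the `Fin` index `r`
corresponds to row `r+1` and `q` to column `q+1`).  The first row is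
`(3, −4, 1, 0, …, 0)`.  For `2 ≤ r ≤ N/4` the `r`-th row is the sum of the
vector with entries `1, −2, 1` in columns `1, 2, 3` and the vector with entries
`−1, 2, −1` in columns `r, r+1, r+2`, where any contribution to column
`N/4 + 1` is discarded and any contribution to column `N/4 + 2` is placed into
column `N/4` instead (contributions to coinciding columns are added; note the
contributions to columns `r+1` and `r+2` vanish automatically below whenever
those column indices exceed `N/4`, which realizes the discarding rule). -/
def M2mat (N : ℕ) : Matrix (Fin (N / 4)) (Fin (N / 4)) ℝ := fun r q =>
  if (r : ℕ) + 1 = 1 then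
    (if (q : ℕ) + 1 = 1 then (3 : ℝ) else 0) +
    (if (q : ℕ) + 1 = 2 then (-4 : ℝ) else 0) +
    (if (q : ℕ) + 1 = 3 then (1 : ℝ) else 0)
  else
    (if (q : ℕ) + 1 = 1 then (1 : ℝ) else 0) +
    (if (q : ℕ) + 1 = 2 then (-2 : ℝ) else 0) +
    (if (q : ℕ) + 1 = 3 then (1 : ℝ) else 0) +
    (if (q : ℕ) + 1 = (r : ℕ) + 1 then (-1 : ℝ) else 0) +
    (if (q : ℕ) + 1 = (r : ℕ) + 2 then (2 : ℝ) else 0) +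
    (if (q : ℕ) + 1 = (r : ℕ) + 3 then (-1 : ℝ) else 0) +
    (if (q : ℕ) + 1 = N / 4 ∧ (r : ℕ) + 1 = N / 4 then (-1 : ℝ) else 0)

/-! Let `n = N / 4` and let `y` be a kernel vector of `M₂`, indexed from `1` and extended by zero.
Rows `2, …, n` say that the second differences `y r - 2 y (r+1) + y (r+2)` all equal the constant
`c = y 1 - 2 y 2 + y 3`, and together with the boundary row `n` this forces
`y r = (n - r + 1)² c / 2` for `r ≥ 2`. Substituting into the first row gives `2 n c = 0`, so
`c = 0`, hence `y r = 0` for `r ≥ 2` and finally `y 1 = c = 0`. -/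

def oneIndexed {α : Type*} [Zero α] {n : ℕ} (v : Fin n → α) (k : ℕ) : α :=
  if h : 1 ≤ k ∧ k ≤ n then v ⟨k - 1, by omega⟩ else 0

open Matrix

section oneIndexed

variable {α : Type*} {n : ℕ}

theorem oneIndexed_val_succ [Zero α] (v : Fin n → α) (q : Fin n) :
    oneIndexed v (q + 1) = v q := by
  simp [oneIndexed, Nat.succ_le_of_lt q.isLt]

theorem oneIndexed_of_lt [Zero α] (v : Fin n → α) {k : ℕ} (hk : n < k) :
    oneIndexed v k = 0 :=
  dif_neg (by omega)

theorem sum_ite_val_succ_eq_mul_oneIndexed [NonAssocSemiring α] (v : Fin n → α) (k : ℕ)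
    (a : α) :
    ∑ q : Fin n, (if (q : ℕ) + 1 = k then a else 0) * v q = a * oneIndexed v k := by
  by_cases hk : 1 ≤ k ∧ k ≤ n
  · rw [Finset.sum_eq_single (⟨k - 1, by omega⟩ : Fin n)]
    · simp [oneIndexed, hk, show k - 1 + 1 = k by omega]
    · rintro q - hq
      rw [if_neg fun h => hq (Fin.ext (by simp; omega)), zero_mul]
    · simp
  · rw [oneIndexed, dif_neg hk, mul_zero]
    refine Finset.sum_eq_zero fun q _ => ?_
    rw [if_neg fun h => hk ⟨by omega, by omega⟩, zero_mul]

end oneIndexed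

theorem M2mat_mulVec_apply_zero (N : ℕ) (v : Fin (N / 4) → ℝ) (h : 0 < N / 4) :
    (M2mat N *ᵥ v) ⟨0, h⟩ = 3 * oneIndexed v 1 - 4 * oneIndexed v 2 + oneIndexed v 3 := by
  simp only [Matrix.mulVec, dotProduct, M2mat, if_true, add_mul, Finset.sum_add_distrib,
    sum_ite_val_succ_eq_mul_oneIndexed]
  ring

theorem M2mat_mulVec_apply (N : ℕ) (v : Fin (N / 4) → ℝ) {s : ℕ} (hs : 2 ≤ s)
    (hsN : s ≤ N / 4) :
    (M2mat N *ᵥ v) ⟨s - 1, by omega⟩ =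
      (oneIndexed v 1 - 2 * oneIndexed v 2 + oneIndexed v 3) - oneIndexed v s
        + 2 * oneIndexed v (s + 1) - oneIndexed v (s + 2)
        - if s = N / 4 then oneIndexed v (N / 4) else 0 := by
  simp only [Matrix.mulVec, dotProduct, M2mat, show s - 1 + 1 = s by omega,
    show s - 1 + 2 = s + 1 by omega, show s - 1 + 3 = s + 2 by omega,
    show s ≠ 1 by omega, if_false]
  by_cases hsN' : s = N / 4
  · simp only [hsN', and_true, add_mul, Finset.sum_add_distrib,
      sum_ite_val_succ_eq_mul_oneIndexed, if_true]
    ring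
  · simp only [hsN', and_false, if_false, zero_mul, add_mul, Finset.sum_add_distrib,
      sum_ite_val_succ_eq_mul_oneIndexed, Finset.sum_const_zero]
    ring

theorem eq_sq_of_second_difference {Y : ℕ → ℝ} {n : ℕ} {c : ℝ}
    (h₁ : Y (n + 1) = 0) (h₂ : Y (n + 2) = 0)
    (hY : ∀ s, 2 ≤ s → s ≤ n →
      c - Y s + 2 * Y (s + 1) - Y (s + 2) - (if s = n then Y n else 0) = 0)
    {s : ℕ} (hs : 2 ≤ s) (hsn : s ≤ n) :
    Y s = ((n : ℝ) - s + 1) ^ 2 * c / 2 ∧ Y (s + 1) = ((n : ℝ) - s) ^ 2 * c / 2 := by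
  induction hsn using Nat.decreasingInduction with
  | self =>
    have e := hY n hs le_rfl
    rw [if_pos rfl] at e
    constructor
    · linear_combination -e / 2 + h₁ - h₂ / 2
    · simpa using h₁
  | of_succ s hsn ih =>
    obtain ⟨y₁, y₂⟩ := ih (by omega)
    have e := hY s hs hsn.le
    rw [if_neg hsn.ne, sub_zero] at e
    push_cast at y₁ y₂
    constructor
    · linear_combination -e + 2 * y₁ - y₂
    · linear_combination y₁

theorem M2mat_isUnit_general (N : ℕ) (hN8 : 8 ≤ N) : IsUnit (M2mat N) := by
  have hn : 2 ≤ N / 4 := by omega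
  refine Matrix.mulVec_injective_iff_isUnit.mp
    ((injective_iff_map_eq_zero (M2mat N).mulVecLin).mpr fun v hv => ?_)
  have hrow i : (M2mat N *ᵥ v) i = 0 := congrFun hv i
  have hY s (hs : 2 ≤ s) (hsn : s ≤ N / 4) := eq_sq_of_second_difference
    (oneIndexed_of_lt v (by omega)) (oneIndexed_of_lt v (by omega))
    (fun s hs hsn => (M2mat_mulVec_apply N v hs hsn).symm.trans (hrow _)) hs hsn
  have hfirst := (M2mat_mulVec_apply_zero N v (by omega)).symm.trans (hrow _)
  set Y := oneIndexed v
  set c := Y 1 - 2 * Y 2 + Y 3 with hc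
  obtain ⟨y₂, y₃⟩ :
      Y 2 = ((N / 4 : ℕ) - 1) ^ 2 * c / 2 ∧ Y 3 = ((N / 4 : ℕ) - 2) ^ 2 * c / 2 := by
    obtain ⟨y₂, y₃⟩ := hY 2 le_rfl hn
    push_cast at y₂ y₃
    exact ⟨by linear_combination y₂, by linear_combination y₃⟩
  have hc0 : c = 0 := by
    have hnc : 2 * ((N / 4 : ℕ) : ℝ) * c = 0 := by
      linear_combination hfirst + 3 * hc - 2 * y₂ + 2 * y₃
    have hn0 : ((N / 4 : ℕ) : ℝ) ≠ 0 := Nat.cast_ne_zero.mpr (by omega)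
    simpa [hn0] using hnc
  funext q
  rw [Pi.zero_apply, ← oneIndexed_val_succ v q]
  change Y (q + 1) = 0
  rcases Nat.eq_zero_or_pos (q : ℕ) with hq | hq
  · rw [hq, zero_add]
    rw [hc0, mul_zero, zero_div] at y₂ y₃
    linear_combination -hc + hc0 + 2 * y₂ - y₃
  · rw [(hY (q + 1) (by omega) q.isLt).1, hc0]
    simp

theorem M2mat_isUnit (N : ℕ) (hN4 : 4 ∣ N) (hN8 : 8 ≤ N) : IsUnit (M2mat N) :=
  M2mat_isUnit_general N hN8
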